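/- arXiv:1712.01023 — 5 statements merged into one kernel-verified Lean document; each statement's English description precedes it below -/
import Mathlib

section
/- Let T be a bounded operator on a separable Hilbert space H and μ ∈ ℂ. If there exists an orthonormal system (f_n) in H with ⟨f_n, T f_n⟩ → μ, then there exists an orthonormal system (f_n) in H such that the Cesàro means (1/n) Σ_{j=1}^n ⟨f_j, T f_j⟩ converge to μ, and conversely. -/
open Filter Topology
local notation "⟪" x ", " y "⟫" => @inner ℂ _ _ x y

lemma finite_gt_inner {H : Type*} [NormedAddCommGroup H] [InnerProductSpace ℂ H]
    {f : ℕ → H} (hf : Orthonormal ℂ f) (x : H) {ε : ℝ} (hε : 0 < ε) :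
    {n : ℕ | ε < ‖⟪f n, x⟫‖}.Finite := by
  have hs : Summable fun i : ℕ => ‖⟪f i, x⟫‖ ^ 2 := hf.inner_products_summable x
  have h1 : ∀ᶠ n in cofinite, ‖⟪f n, x⟫‖ ^ 2 < ε ^ 2 :=
    hs.tendsto_cofinite_zero.eventually_lt_const (by positivity)
  rw [Filter.eventually_cofinite] at h1
  refine h1.subset fun n hn => ?_
  simp only [Set.mem_setOf_eq, not_lt] at *
  exact pow_le_pow_left₀ hε.le hn.le 2

lemma blockpick {H : Type*} [NormedAddCommGroup H] [InnerProductSpace ℂ H] [CompleteSpace H]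
    {f : ℕ → H} (hf : Orthonormal ℂ f) (T : H →L[ℂ] H)
    (t : Finset ℂ) (ht : ∀ y ∈ t, MapClusterPt y atTop (fun n => ⟪f n, T (f n)⟫))
    (F : Finset ℕ) {ε : ℝ} (hε : 0 < ε) :
    ∃ j : ℂ → ℕ, Set.InjOn j t ∧ (∀ y ∈ t, j y ∉ F) ∧
      (∀ y ∈ t, ‖⟪f (j y), T (f (j y))⟫ - y‖ < ε) ∧
      (∀ y ∈ t, ∀ y' ∈ t, y ≠ y' → ‖⟪f (j y), T (f (j y'))⟫‖ ≤ ε) := by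
  classical
  induction t using Finset.induction_on with
  | empty => exact ⟨fun _ => 0, by simp [Set.InjOn], by simp, by simp, by simp⟩
  | @insert y₀ s hy0 ih =>
    obtain ⟨j, hjinj, hjF, hjapp, hjcross⟩ :=
      ih fun y hy => ht y (Finset.mem_insert_of_mem hy)
    -- bad sets
    have hrow : ∀ i : ℕ, {n : ℕ | ε < ‖⟪f i, T (f n)⟫‖}.Finite := by
      intro i
      have := finite_gt_inner hf (ContinuousLinearMap.adjoint T (f i)) hε
      refine this.subset fun n hn => ?_
      simp only [Set.mem_setOf_eq] at *
      rwa [norm_inner_symm, ContinuousLinearMap.adjoint_inner_left]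
    have hcol : ∀ i : ℕ, {n : ℕ | ε < ‖⟪f n, T (f i)⟫‖}.Finite :=
      fun i => finite_gt_inner hf (T (f i)) hε
    have hbad : (↑F ∪ ↑(s.image j) ∪ ⋃ y ∈ s, ({n : ℕ | ε < ‖⟪f (j y), T (f n)⟫‖}
        ∪ {n : ℕ | ε < ‖⟪f n, T (f (j y))⟫‖}) : Set ℕ).Finite := by
      refine (F.finite_toSet.union (s.image j).finite_toSet).union ?_
      exact Set.Finite.biUnion s.finite_toSet fun y _ => (hrow (j y)).union (hcol (j y))
    have hinf : {n : ℕ | ‖⟪f n, T (f n)⟫ - y₀‖ < ε}.Infinite := by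
      have hcl := ht y₀ (Finset.mem_insert_self _ _)
      rw [mapClusterPt_iff_frequently] at hcl
      have := hcl (Metric.ball y₀ ε) (Metric.ball_mem_nhds _ hε)
      rw [Nat.frequently_atTop_iff_infinite] at this
      refine this.mono fun n hn => ?_
      simpa [Metric.mem_ball, dist_eq_norm] using hn
    obtain ⟨n, hnS, hnbad⟩ := (hinf.diff hbad).nonempty
    simp only [Set.mem_union, Set.mem_iUnion, not_or, not_exists, Finset.mem_coe,
      Finset.coe_image, Set.mem_image, Set.mem_setOf_eq] at hnbad
    obtain ⟨⟨hnF, hnim⟩, hncross⟩ := hnbad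
    have hne0 : ∀ y ∈ s, y ≠ y₀ := fun y hy h => hy0 (h ▸ hy)
    have hup : ∀ y ∈ s, Function.update j y₀ n y = j y :=
      fun y hy => Function.update_of_ne (hne0 y hy) _ _
    have hup0 : Function.update j y₀ n y₀ = n := Function.update_self _ _ _
    have hnj : ∀ y ∈ s, j y ≠ n := by
      intro y hy h
      exact hnim y ⟨hy, h⟩
    refine ⟨Function.update j y₀ n, ?_, ?_, ?_, ?_⟩
    · intro y hy y' hy' hyy'
      simp only [Finset.coe_insert, Set.mem_insert_iff, Finset.mem_coe] at hy hy'
      rcases hy with h1 | h1 <;> rcases hy' with h2 | h2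
      · exact h1.trans h2.symm
      · rw [h1, hup0, hup y' h2] at hyy'
        exact absurd hyy'.symm (hnj y' h2)
      · rw [h2, hup0, hup y h1] at hyy'
        exact absurd hyy' (hnj y h1)
      · rw [hup y h1, hup y' h2] at hyy'
        exact hjinj h1 h2 hyy'
    · intro y hy
      rcases Finset.mem_insert.mp hy with h1 | h1
      · rw [h1, hup0]; exact hnF
      · rw [hup y h1]; exact hjF y h1
    · intro y hy
      rcases Finset.mem_insert.mp hy with h1 | h1
      · rw [h1, hup0]; exact hnS
      · rw [hup y h1]; exact hjapp y h1
    · intro y hy y' hy' hne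
      rcases Finset.mem_insert.mp hy with h1 | h1 <;>
        rcases Finset.mem_insert.mp hy' with h2 | h2
      · exact absurd (h1.trans h2.symm) hne
      · rw [h1, hup0, hup y' h2]
        exact not_lt.mp (hncross y' h2).2
      · rw [h2, hup0, hup y h1]
        exact not_lt.mp (hncross y h1).1
      · rw [hup y h1, hup y' h2]
        exact hjcross y h1 y' h2 hne

lemma mean_lower {b : ℕ → ℝ} {u l : ℝ} {N : ℕ} (hb : ∀ n, N ≤ n → u ≤ b n)
    (hl : Tendsto (fun n : ℕ => (n : ℝ)⁻¹ * ∑ j ∈ Finset.range n, b j) atTop (𝓝 l)) :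
    u ≤ l := by
  set S := ∑ j ∈ Finset.range N, b j with hS
  have ht : Tendsto (fun n : ℕ => (n : ℝ)⁻¹ * (S - N * u) + u) atTop (𝓝 u) := by
    have := (tendsto_inv_atTop_nhds_zero_nat.mul_const (S - N * u)).add_const u
    simpa using this
  refine le_of_tendsto_of_tendsto ht hl ?_
  filter_upwards [eventually_ge_atTop (max N 1)] with n hn
  have hN : N ≤ n := le_trans (le_max_left _ _) hn
  have hn1 : 1 ≤ n := le_trans (le_max_right _ _) hn
  have hnpos : (0 : ℝ) < n := by exact_mod_cast hn1
  have hsplit : ∑ j ∈ Finset.range n, b j = S + ∑ j ∈ Finset.Ico N n, b j := by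
    rw [hS, ← Finset.sum_range_add_sum_Ico b hN]
  have hlow : ((n - N : ℕ) : ℝ) * u ≤ ∑ j ∈ Finset.Ico N n, b j := by
    calc ((n - N : ℕ) : ℝ) * u = ∑ _j ∈ Finset.Ico N n, u := by
          rw [Finset.sum_const, Nat.card_Ico, nsmul_eq_mul]
      _ ≤ ∑ j ∈ Finset.Ico N n, b j :=
          Finset.sum_le_sum fun j hj => hb j (Finset.mem_Ico.mp hj).1
  have hkey : S - N * u + n * u ≤ ∑ j ∈ Finset.range n, b j := by
    rw [hsplit]
    have : ((n : ℝ) - N) * u ≤ ∑ j ∈ Finset.Ico N n, b j := by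
      rwa [Nat.cast_sub hN] at hlow
    nlinarith [this]
  calc (n : ℝ)⁻¹ * (S - N * u) + u = (n : ℝ)⁻¹ * (S - N * u + n * u) := by
        field_simp
      _ ≤ (n : ℝ)⁻¹ * ∑ j ∈ Finset.range n, b j :=
        mul_le_mul_of_nonneg_left hkey (by positivity)

lemma mem_closure_convexHull_cluster {a : ℕ → ℂ} {μ : ℂ} {R : ℝ}
    (hb : ∀ n, ‖a n‖ ≤ R)
    (hμ : Tendsto (fun n : ℕ => (n : ℝ)⁻¹ • ∑ j ∈ Finset.range n, a j) atTop (𝓝 μ)) :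
    μ ∈ closure (convexHull ℝ {z : ℂ | MapClusterPt z atTop a}) := by
  set K := {z : ℂ | MapClusterPt z atTop a} with hK
  by_contra hμS
  obtain ⟨L, u, hLμ, hLS⟩ := geometric_hahn_banach_point_closed
    ((convex_convexHull ℝ K).closure) isClosed_closure hμS
  have hKU : ∀ z ∈ K, u < L z := fun z hz =>
    hLS z (subset_closure (subset_convexHull ℝ K hz))
  have hev : ∀ᶠ n in atTop, u < L (a n) := by
    by_contra hev
    rw [not_eventually] at hev
    set s : Set ℂ := {w : ℂ | u < L w}ᶜ ∩ Metric.closedBall 0 R with hs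
    have hC : IsCompact s :=
      (isCompact_closedBall (0 : ℂ) R).inter_left
        (isOpen_lt continuous_const L.continuous).isClosed_compl
    have hfreq : ∃ᶠ n in atTop, a n ∈ s := by
      refine (hev.and_eventually (Eventually.of_forall fun n => ?_)).mono
        fun n ⟨h1, h2⟩ => ⟨h1, h2⟩
      simpa [Metric.mem_closedBall, dist_eq_norm] using hb n
    have hNB : (Filter.map a atTop ⊓ 𝓟 s).NeBot := by
      have h2 : ∃ᶠ w in Filter.map a atTop, w ∈ s := Filter.frequently_map.mpr hfreq
      rw [frequently_iff_neBot] at h2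
      simpa using h2
    obtain ⟨x, hxs, hx⟩ := hC.exists_clusterPt (f := Filter.map a atTop ⊓ 𝓟 s) inf_le_right
    have hxK : x ∈ K := hx.mono inf_le_left
    exact hxs.1 (hKU x hxK)
  obtain ⟨N, hN⟩ := eventually_atTop.mp hev
  have hmean : Tendsto (fun n : ℕ => (n : ℝ)⁻¹ * ∑ j ∈ Finset.range n, L (a j))
      atTop (𝓝 (L μ)) := by
    have := (L.continuous.tendsto μ).comp hμ
    refine this.congr fun n => ?_
    simp only [Function.comp_apply, map_smul, map_sum, smul_eq_mul]
  exact absurd (mean_lower (fun n hn => (hN n hn).le) hmean) (not_le.mpr hLμ)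

lemma inner_sum_sum {H : Type*} [NormedAddCommGroup H] [InnerProductSpace ℂ H]
    (s s' : Finset ℂ) (c c' : ℂ → ℝ) (v v' : ℂ → H) :
    ⟪∑ y ∈ s, (c y : ℂ) • v y, ∑ y' ∈ s', (c' y' : ℂ) • v' y'⟫
      = ∑ y ∈ s, ∑ y' ∈ s', ((c y : ℂ) * (c' y' : ℂ)) * ⟪v y, v' y'⟫ := by
  rw [sum_inner]
  refine Finset.sum_congr rfl fun y hy => ?_
  rw [inner_sum]
  refine Finset.sum_congr rfl fun y' hy' => ?_
  rw [inner_smul_left, inner_smul_right, Complex.conj_ofReal]; ring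

set_option maxHeartbeats 2000000 in
theorem exists_ons_tendsto_iff_exists_ons_cesaro_tendsto
    {H : Type*} [NormedAddCommGroup H] [InnerProductSpace ℂ H] [CompleteSpace H]
    [TopologicalSpace.SeparableSpace H]
    (T : H →L[ℂ] H) (μ : ℂ) :
    (∃ f : ℕ → H, Orthonormal ℂ f ∧
        Tendsto (fun n => ⟪f n, T (f n)⟫) atTop (𝓝 μ)) ↔
      (∃ f : ℕ → H, Orthonormal ℂ f ∧
        Tendsto (fun (n : ℕ) => (n : ℂ)⁻¹ • ∑ j ∈ Finset.range n, ⟪f j, T (f j)⟫)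
          atTop (𝓝 μ)) := by
  have hcast : ∀ (z : ℂ) (n : ℕ), (n : ℂ)⁻¹ • z = (n : ℝ)⁻¹ • z := by
    intro z n
    rw [Complex.real_smul, smul_eq_mul]
    push_cast
    ring
  constructor
  · rintro ⟨f, hf, hten⟩
    refine ⟨f, hf, ?_⟩
    refine hten.cesaro_smul.congr fun n => ?_
    rw [hcast]
  · rintro ⟨f, hf, hcμ⟩
    classical
    set a : ℕ → ℂ := fun n => ⟪f n, T (f n)⟫ with ha
    have hfn : ∀ n, ‖f n‖ = 1 := fun n => hf.1 n
    have haR : ∀ n, ‖a n‖ ≤ ‖T‖ := by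
      intro n
      have h1 := norm_inner_le_norm (𝕜 := ℂ) (f n) (T (f n))
      have h2 := T.le_opNorm (f n)
      rw [hfn n] at h1 h2
      simpa using h1.trans (by simpa using h2)
    have hcμ' : Tendsto (fun n : ℕ => (n : ℝ)⁻¹ • ∑ j ∈ Finset.range n, a j)
        atTop (𝓝 μ) := by
      refine hcμ.congr fun n => ?_
      rw [hcast]
    have hμcl := mem_closure_convexHull_cluster haR hcμ'
    have hDATA : ∀ ℓ : ℕ, ∃ d : Finset ℂ × (ℂ → ℝ),
        (∀ y ∈ d.1, MapClusterPt y atTop a) ∧ (∀ y ∈ d.1, 0 ≤ d.2 y) ∧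
        (∑ y ∈ d.1, d.2 y = 1) ∧ ‖(∑ y ∈ d.1, d.2 y • y) - μ‖ < 1 / (ℓ + 1 : ℝ) := by
      intro ℓ
      have hpos : (0 : ℝ) < 1 / (ℓ + 1) := by positivity
      obtain ⟨b, hbmem, hbd⟩ := Metric.mem_closure_iff.mp hμcl _ hpos
      rw [convexHull_eq_union_convexHull_finite_subsets] at hbmem
      obtain ⟨tt, httK, hbt⟩ := Set.mem_iUnion₂.mp hbmem
      rw [Finset.convexHull_eq] at hbt
      obtain ⟨w, hw0, hw1, hcm⟩ := hbt
      rw [Finset.centerMass_eq_of_sum_1 _ _ hw1] at hcm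
      simp only [id] at hcm
      refine ⟨(tt, w), fun y hy => httK hy, hw0, hw1, ?_⟩
      rw [hcm]
      rwa [← dist_eq_norm, dist_comm]
    choose D hD1 hD2 hD3 hD4 using hDATA
    set t : ℕ → Finset ℂ := fun ℓ => (D ℓ).1 with htdef
    set w : ℕ → ℂ → ℝ := fun ℓ => (D ℓ).2 with hwdef
    set ε : ℕ → ℝ := fun ℓ => (1 / (ℓ + 1 : ℝ)) * (1 / (((t ℓ).card : ℝ) ^ 2 + 1)) with hεdef
    have hεpos : ∀ ℓ, 0 < ε ℓ := fun ℓ => by positivity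
    have hεle : ∀ ℓ, ε ℓ ≤ 1 / (ℓ + 1 : ℝ) := by
      intro ℓ
      rw [hεdef]
      have h1 : (1 : ℝ) / (((t ℓ).card : ℝ) ^ 2 + 1) ≤ 1 := by
        rw [div_le_one (by positivity)]; nlinarith [sq_nonneg ((t ℓ).card : ℝ)]
      calc (1 / (ℓ + 1 : ℝ)) * (1 / (((t ℓ).card : ℝ) ^ 2 + 1))
          ≤ (1 / (ℓ + 1 : ℝ)) * 1 := by
            apply mul_le_mul_of_nonneg_left h1 (by positivity)
        _ = 1 / (ℓ + 1 : ℝ) := mul_one _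
    have hεcard : ∀ ℓ, ((t ℓ).card : ℝ) ^ 2 * ε ℓ ≤ 1 / (ℓ + 1 : ℝ) := by
      intro ℓ
      have h2 : (0 : ℝ) < ((t ℓ).card : ℝ) ^ 2 + 1 := by positivity
      rw [hεdef]
      calc ((t ℓ).card : ℝ) ^ 2 * ((1 / (ℓ + 1 : ℝ)) * (1 / (((t ℓ).card : ℝ) ^ 2 + 1)))
          = (((t ℓ).card : ℝ) ^ 2 / (((t ℓ).card : ℝ) ^ 2 + 1)) * (1 / (ℓ + 1 : ℝ)) := by ring
        _ ≤ 1 * (1 / (ℓ + 1 : ℝ)) := by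
            refine mul_le_mul_of_nonneg_right ?_ (by positivity)
            rw [div_le_one h2]; linarith
        _ = 1 / (ℓ + 1 : ℝ) := one_mul _
    have hPICK : ∀ (ℓ : ℕ) (F : Finset ℕ), ∃ jj : ℂ → ℕ, Set.InjOn jj (t ℓ) ∧
        (∀ y ∈ t ℓ, jj y ∉ F) ∧
        (∀ y ∈ t ℓ, ‖⟪f (jj y), T (f (jj y))⟫ - y‖ < ε ℓ) ∧
        (∀ y ∈ t ℓ, ∀ y' ∈ t ℓ, y ≠ y' → ‖⟪f (jj y), T (f (jj y'))⟫‖ ≤ ε ℓ) :=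
      fun ℓ F => blockpick hf T (t ℓ) (hD1 ℓ) F (hεpos ℓ)
    choose jf hjf1 hjf2 hjf3 hjf4 using hPICK
    set st : ℕ → Finset ℕ :=
      fun ℓ => Nat.rec ∅ (fun ℓ' Fp => Fp ∪ Finset.image (jf ℓ' Fp) (t ℓ')) ℓ with hstdef
    have hstS : ∀ ℓ, st (ℓ + 1) = st ℓ ∪ Finset.image (jf ℓ (st ℓ)) (t ℓ) := fun _ => rfl
    set j : ℕ → ℂ → ℕ := fun ℓ => jf ℓ (st ℓ) with hjdef
    have hmono : ∀ l k, k ≤ l → st k ⊆ st l := by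
      intro l
      induction l with
      | zero => intro k hk; rw [Nat.le_zero.mp hk]
      | succ l ih =>
        intro k hk
        rcases eq_or_lt_of_le hk with rfl | hlt
        · exact subset_rfl
        · exact (ih k (Nat.lt_succ_iff.mp hlt)).trans
            (by rw [hstS]; exact Finset.subset_union_left)
    have hjin : ∀ k l, k < l → ∀ y ∈ t k, j k y ∈ st l := by
      intro k l hkl y hy
      refine hmono l (k + 1) hkl ?_
      rw [hstS]
      exact Finset.mem_union_right _ (Finset.mem_image_of_mem _ hy)
    have hjout : ∀ k, ∀ y ∈ t k, j k y ∉ st k := fun k => hjf2 k (st k)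
    have hdistinct : ∀ k l y y', y ∈ t k → y' ∈ t l → j k y = j l y' → k = l ∧ y = y' := by
      intro k l y y' hy hy' heq
      rcases lt_trichotomy k l with h | h | h
      · exact absurd (heq ▸ hjin k l h y hy) (hjout l y' hy')
      · subst h; exact ⟨rfl, hjf1 k (st k) hy hy' heq⟩
      · exact absurd (heq ▸ hjin l k h y' hy') (hjout k y hy)
    set g : ℕ → H := fun ℓ => ∑ y ∈ t ℓ, (↑(Real.sqrt (w ℓ y)) : ℂ) • f (j ℓ y) with hgdef
    have hw1le : ∀ ℓ y, y ∈ t ℓ → w ℓ y ≤ 1 := by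
      intro ℓ y hy
      rw [← hD3 ℓ]
      exact Finset.single_le_sum (fun i hi => hD2 ℓ i hi) hy
    have hsq1 : ∀ ℓ y, y ∈ t ℓ → Real.sqrt (w ℓ y) ≤ 1 := by
      intro ℓ y hy
      rw [show (1 : ℝ) = Real.sqrt 1 by simp]
      exact Real.sqrt_le_sqrt (hw1le ℓ y hy)
    have hfI := orthonormal_iff_ite.mp hf
    have hgON : Orthonormal ℂ g := by
      rw [orthonormal_iff_ite]
      intro k l
      rw [hgdef]
      simp only
      rw [inner_sum_sum]
      by_cases hkl : k = l
      · subst hkl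
        rw [if_pos rfl]
        have hrow : ∀ y ∈ t k, ∑ y' ∈ t k,
            ((Real.sqrt (w k y) : ℂ) * (Real.sqrt (w k y') : ℂ)) * ⟪f (j k y), f (j k y')⟫
            = (w k y : ℂ) := by
          intro y hy
          have hterm : ∀ y' ∈ t k,
              ((Real.sqrt (w k y) : ℂ) * (Real.sqrt (w k y') : ℂ)) * ⟪f (j k y), f (j k y')⟫
              = if y' = y then (w k y : ℂ) else 0 := by
            intro y' hy'
            rw [hfI]
            by_cases h : y' = y
            · subst h
              rw [if_pos rfl, if_pos rfl, mul_one, ← Complex.ofReal_mul,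
                Real.mul_self_sqrt (hD2 k y' hy')]
            · rw [if_neg h, if_neg fun heq => h (hdistinct k k y y' hy hy' heq).2.symm,
                mul_zero]
          rw [Finset.sum_congr rfl hterm, Finset.sum_ite_eq' (t k) y _, if_pos hy]
        rw [Finset.sum_congr rfl hrow]
        rw [← Complex.ofReal_sum, hD3 k, Complex.ofReal_one]
      · rw [if_neg hkl]
        refine Finset.sum_eq_zero fun y hy => Finset.sum_eq_zero fun y' hy' => ?_
        rw [hfI, if_neg fun heq => hkl (hdistinct k l y y' hy hy' heq).1, mul_zero]
    refine ⟨g, hgON, ?_⟩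
    rw [← tendsto_sub_nhds_zero_iff]
    apply squeeze_zero_norm (a := fun ℓ : ℕ => 3 * (1 / (ℓ + 1 : ℝ)))
    · intro ℓ
      have hTg : T (g ℓ) = ∑ y ∈ t ℓ, (↑(Real.sqrt (w ℓ y)) : ℂ) • T (f (j ℓ y)) := by
        rw [hgdef]; simp [map_sum, map_smul]
      have hexp : ⟪g ℓ, T (g ℓ)⟫ = ∑ y ∈ t ℓ, ∑ y' ∈ t ℓ,
          ((Real.sqrt (w ℓ y) : ℂ) * (Real.sqrt (w ℓ y') : ℂ)) * ⟪f (j ℓ y), T (f (j ℓ y'))⟫ := by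
        rw [hgdef] at *
        rw [hTg, inner_sum_sum]
      have hsplit : ⟪g ℓ, T (g ℓ)⟫ = (∑ y ∈ t ℓ, (w ℓ y : ℂ) * a (j ℓ y)) +
          ∑ y ∈ t ℓ, ∑ y' ∈ (t ℓ).erase y,
            ((Real.sqrt (w ℓ y) : ℂ) * (Real.sqrt (w ℓ y') : ℂ)) * ⟪f (j ℓ y), T (f (j ℓ y'))⟫ := by
        rw [hexp, ← Finset.sum_add_distrib]
        refine Finset.sum_congr rfl fun y hy => ?_
        rw [← Finset.add_sum_erase _ _ hy]
        congr 1
        rw [← Complex.ofReal_mul, Real.mul_self_sqrt (hD2 ℓ y hy)]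
      have hdecomp : ⟪g ℓ, T (g ℓ)⟫ - μ = (∑ y ∈ t ℓ, (w ℓ y : ℂ) * (a (j ℓ y) - y)) +
          (∑ y ∈ t ℓ, ∑ y' ∈ (t ℓ).erase y,
            ((Real.sqrt (w ℓ y) : ℂ) * (Real.sqrt (w ℓ y') : ℂ)) * ⟪f (j ℓ y), T (f (j ℓ y'))⟫) +
          ((∑ y ∈ t ℓ, w ℓ y • y) - μ) := by
        rw [hsplit]
        have h1 : ∑ y ∈ t ℓ, (w ℓ y : ℂ) * (a (j ℓ y) - y)
            = (∑ y ∈ t ℓ, (w ℓ y : ℂ) * a (j ℓ y)) - ∑ y ∈ t ℓ, (w ℓ y : ℂ) * y := by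
          rw [← Finset.sum_sub_distrib]
          exact Finset.sum_congr rfl fun y _ => mul_sub _ _ _
        have h2 : ∑ y ∈ t ℓ, w ℓ y • y = ∑ y ∈ t ℓ, (w ℓ y : ℂ) * y :=
          Finset.sum_congr rfl fun y _ => Complex.real_smul
        rw [h1, h2]
        ring
      rw [hdecomp]
      have hb1 : ‖∑ y ∈ t ℓ, (w ℓ y : ℂ) * (a (j ℓ y) - y)‖ ≤ 1 / (ℓ + 1 : ℝ) := by
        calc ‖∑ y ∈ t ℓ, (w ℓ y : ℂ) * (a (j ℓ y) - y)‖
            ≤ ∑ y ∈ t ℓ, ‖(w ℓ y : ℂ) * (a (j ℓ y) - y)‖ := norm_sum_le _ _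
          _ ≤ ∑ y ∈ t ℓ, w ℓ y * ε ℓ := by
              refine Finset.sum_le_sum fun y hy => ?_
              rw [norm_mul, Complex.norm_real, Real.norm_of_nonneg (hD2 ℓ y hy)]
              exact mul_le_mul_of_nonneg_left (hjf3 ℓ (st ℓ) y hy).le (hD2 ℓ y hy)
          _ = ε ℓ := by rw [← Finset.sum_mul, hD3 ℓ, one_mul]
          _ ≤ 1 / (ℓ + 1 : ℝ) := hεle ℓ
      have hb2 : ‖∑ y ∈ t ℓ, ∑ y' ∈ (t ℓ).erase y,
          ((Real.sqrt (w ℓ y) : ℂ) * (Real.sqrt (w ℓ y') : ℂ)) * ⟪f (j ℓ y), T (f (j ℓ y'))⟫‖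
          ≤ 1 / (ℓ + 1 : ℝ) := by
        have hterm : ∀ y ∈ t ℓ, ∀ y' ∈ (t ℓ).erase y,
            ‖((Real.sqrt (w ℓ y) : ℂ) * (Real.sqrt (w ℓ y') : ℂ)) * ⟪f (j ℓ y), T (f (j ℓ y'))⟫‖
            ≤ ε ℓ := by
          intro y hy y' hy'
          obtain ⟨hne, hy'mem⟩ := Finset.mem_erase.mp hy'
          have hcross := hjf4 ℓ (st ℓ) y hy y' hy'mem (Ne.symm hne)
          have hs1 : ‖((Real.sqrt (w ℓ y) : ℂ))‖ ≤ 1 := by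
            rw [Complex.norm_real, Real.norm_of_nonneg (Real.sqrt_nonneg _)]
            exact hsq1 ℓ y hy
          have hs2 : ‖((Real.sqrt (w ℓ y') : ℂ))‖ ≤ 1 := by
            rw [Complex.norm_real, Real.norm_of_nonneg (Real.sqrt_nonneg _)]
            exact hsq1 ℓ y' hy'mem
          calc ‖((Real.sqrt (w ℓ y) : ℂ) * (Real.sqrt (w ℓ y') : ℂ)) * ⟪f (j ℓ y), T (f (j ℓ y'))⟫‖
              = ‖(Real.sqrt (w ℓ y) : ℂ)‖ * ‖(Real.sqrt (w ℓ y') : ℂ)‖ *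
                ‖⟪f (j ℓ y), T (f (j ℓ y'))⟫‖ := by rw [norm_mul, norm_mul]
            _ ≤ 1 * 1 * ε ℓ := by
                refine mul_le_mul (mul_le_mul hs1 hs2 (norm_nonneg _) zero_le_one) hcross
                  (norm_nonneg _) (by norm_num)
            _ = ε ℓ := by ring
        calc ‖∑ y ∈ t ℓ, ∑ y' ∈ (t ℓ).erase y,
              ((Real.sqrt (w ℓ y) : ℂ) * (Real.sqrt (w ℓ y') : ℂ)) * ⟪f (j ℓ y), T (f (j ℓ y'))⟫‖
            ≤ ∑ y ∈ t ℓ, ‖∑ y' ∈ (t ℓ).erase y,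
              ((Real.sqrt (w ℓ y) : ℂ) * (Real.sqrt (w ℓ y') : ℂ)) * ⟪f (j ℓ y), T (f (j ℓ y'))⟫‖ :=
              norm_sum_le _ _
          _ ≤ ∑ y ∈ t ℓ, ∑ y' ∈ (t ℓ).erase y, ‖((Real.sqrt (w ℓ y) : ℂ) *
              (Real.sqrt (w ℓ y') : ℂ)) * ⟪f (j ℓ y), T (f (j ℓ y'))⟫‖ :=
              Finset.sum_le_sum fun y _ => norm_sum_le _ _
          _ ≤ ∑ y ∈ t ℓ, ∑ _y' ∈ (t ℓ).erase y, ε ℓ :=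
              Finset.sum_le_sum fun y hy => Finset.sum_le_sum fun y' hy' => hterm y hy y' hy'
          _ ≤ ∑ _y ∈ t ℓ, ((t ℓ).card : ℝ) * ε ℓ := by
              refine Finset.sum_le_sum fun y hy => ?_
              rw [Finset.sum_const, nsmul_eq_mul]
              refine mul_le_mul_of_nonneg_right ?_ (hεpos ℓ).le
              exact_mod_cast Finset.card_erase_le
          _ = ((t ℓ).card : ℝ) ^ 2 * ε ℓ := by
              rw [Finset.sum_const, nsmul_eq_mul]; ring
          _ ≤ 1 / (ℓ + 1 : ℝ) := hεcard ℓ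
      have hb3 : ‖(∑ y ∈ t ℓ, w ℓ y • y) - μ‖ ≤ 1 / (ℓ + 1 : ℝ) := (hD4 ℓ).le
      calc ‖(∑ y ∈ t ℓ, (w ℓ y : ℂ) * (a (j ℓ y) - y)) +
            (∑ y ∈ t ℓ, ∑ y' ∈ (t ℓ).erase y,
              ((Real.sqrt (w ℓ y) : ℂ) * (Real.sqrt (w ℓ y') : ℂ)) * ⟪f (j ℓ y), T (f (j ℓ y'))⟫) +
            ((∑ y ∈ t ℓ, w ℓ y • y) - μ)‖
          ≤ ‖∑ y ∈ t ℓ, (w ℓ y : ℂ) * (a (j ℓ y) - y)‖ +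
            ‖∑ y ∈ t ℓ, ∑ y' ∈ (t ℓ).erase y,
              ((Real.sqrt (w ℓ y) : ℂ) * (Real.sqrt (w ℓ y') : ℂ)) * ⟪f (j ℓ y), T (f (j ℓ y'))⟫‖ +
            ‖(∑ y ∈ t ℓ, w ℓ y • y) - μ‖ := norm_add₃_le
        _ ≤ 3 * (1 / (ℓ + 1 : ℝ)) := by linarith
    · simpa using (tendsto_one_div_add_atTop_nhds_zero_nat (𝕜 := ℝ)).const_mul 3
end

section
/- Let T be a bounded operator on a separable Hilbert space H and μ ∈ ℂ. There exists an orthonormal system (f_n) in H with (1/n) Σ_{j=1}^n ⟨f_j, T f_j⟩ → μ if and only if there exists an orthonormal basis (e_n) of H with (1/n) Σ_{j=1}^n ⟨e_j, T e_j⟩ → μ. -/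
open Filter Topology

local notation "⟪" x ", " y "⟫" => @inner ℂ _ _ x y

lemma aux_countable_of_orthonormal {H : Type*} [NormedAddCommGroup H] [InnerProductSpace ℂ H]
    [TopologicalSpace.SeparableSpace H] {w : Set H}
    (h : Orthonormal ℂ ((↑) : w → H)) : w.Countable := by
  have hdist : ∀ x ∈ w, ∀ y ∈ w, x ≠ y → (1:ℝ) ≤ dist x y := by
    intro x hx y hy hxy
    have h0 : ⟪((⟨x, hx⟩ : w) : H), ((⟨y, hy⟩ : w) : H)⟫ = 0 :=
      h.2 (show (⟨x, hx⟩ : w) ≠ ⟨y, hy⟩ by simpa using hxy)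
    have hsq : ‖x - y‖ ^ 2 = 2 := by
      have := @norm_sub_sq ℂ _ _ _ _ ((⟨x, hx⟩ : w) : H) ((⟨y, hy⟩ : w) : H)
      rw [h0] at this
      simp [h.1 ⟨x, hx⟩, h.1 ⟨y, hy⟩] at this
      norm_num at this
      linarith
    rw [dist_eq_norm]
    nlinarith [norm_nonneg (x - y)]
  have : w.PairwiseDisjoint (fun x => Metric.ball x (1/3 : ℝ)) := by
    intro x hx y hy hxy
    refine Set.disjoint_left.2 fun z hzx hzy => ?_
    have := hdist x hx y hy hxy
    have hx' : dist z x < 1/3 := Metric.mem_ball.1 hzx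
    have hy' : dist z y < 1/3 := Metric.mem_ball.1 hzy
    have := dist_triangle x z y
    rw [dist_comm x z] at this
    linarith
  exact this.countable_of_isOpen (fun _ _ => Metric.isOpen_ball)
    (fun x _ => ⟨x, by simp [Metric.mem_ball]⟩)

lemma aux_log_div_tendsto : Tendsto (fun n : ℕ => (Nat.log 2 n : ℝ) / n) atTop (𝓝 0) := by
  have h1 : Tendsto (fun x : ℝ => Real.log x / x) atTop (𝓝 0) :=
    Real.isLittleO_log_id_atTop.tendsto_div_nhds_zero
  have h2 : Tendsto (fun n : ℕ => Real.log n / n * (Real.log 2)⁻¹) atTop (𝓝 0) := by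
    simpa using (h1.comp tendsto_natCast_atTop_atTop).mul_const (Real.log 2)⁻¹
  refine squeeze_zero (fun n => by positivity) (fun n => ?_) h2
  have hlb : (Nat.log 2 n : ℝ) ≤ Real.logb 2 n := by
    simpa using Real.natLog_le_logb n 2
  rcases Nat.eq_zero_or_pos n with rfl | hn
  · simp
  · have heq : Real.log n / n * (Real.log 2)⁻¹ = (Real.log n / Real.log 2) / n := by ring
    rw [← Real.log_div_log] at hlb
    rw [heq]
    gcongr

theorem exists_ons_cesaro_tendsto_iff_exists_onb_cesaro_tendsto
    {H : Type*} [NormedAddCommGroup H] [InnerProductSpace ℂ H] [CompleteSpace H]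
    [TopologicalSpace.SeparableSpace H]
    (T : H →L[ℂ] H) (μ : ℂ) :
    (∃ f : ℕ → H, Orthonormal ℂ f ∧
        Tendsto (fun (n : ℕ) => (n : ℂ)⁻¹ • ∑ j ∈ Finset.range n, ⟪f j, T (f j)⟫)
          atTop (𝓝 μ)) ↔
      (∃ e : HilbertBasis ℕ ℂ H,
        Tendsto (fun (n : ℕ) => (n : ℂ)⁻¹ • ∑ j ∈ Finset.range n, ⟪e j, T (e j)⟫)
          atTop (𝓝 μ)) := by
  constructor
  · rintro ⟨f, hf, hlim⟩
    classical
    obtain ⟨w, b, hsub, hb⟩ := hf.toSubtypeRange.exists_hilbertBasis_extension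
    have honw : Orthonormal ℂ ((↑) : w → H) := hb ▸ b.orthonormal
    have hwc : w.Countable := aux_countable_of_orthonormal honw
    have hfinj : Function.Injective f := hf.linearIndependent.injective
    have hdc : Countable (w \ Set.range f : Set H) :=
      (hwc.mono Set.diff_subset).to_subtype
    obtain ⟨c, hc⟩ := Countable.exists_injective_nat (w \ Set.range f : Set H)
    set S : Set ℕ := Set.range (fun i : (w \ Set.range f : Set H) => 2 ^ (c i + 1)) with hSdef
    set p : ℕ → Prop := fun j => j ∉ S with hpdef
    have hpS : ∀ j, p j ↔ j ∉ S := fun j => Iff.rfl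
    have hpi : (Set.Infinite (setOf p)) := by
      refine Set.Infinite.mono ?_ (Set.infinite_range_of_injective
        (f := fun k : ℕ => 2 * k + 1) (fun a b h => by have h' : 2*a+1 = 2*b+1 := h; omega))
      rintro j ⟨k, rfl⟩
      rintro ⟨i, hi⟩
      have hi' : 2 ^ (c i + 1) = 2 * k + 1 := hi
      have h2 : 2 ^ (c i + 1) = 2 * 2 ^ (c i) := by ring
      omega
    -- the reordered family
    set E : ℕ → H := fun j =>
      if h : j ∈ S then ((h.choose : (w \ Set.range f : Set H)) : H)
      else f (Nat.count p j) with hEdef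
    have hE1 : ∀ (j : ℕ) (h : j ∈ S), E j = (h.choose : H) := by
      intro j h; rw [hEdef]; simp only [dif_pos h]
    have hE2 : ∀ (j : ℕ), j ∉ S → E j = f (Nat.count p j) := by
      intro j h; rw [hEdef]; simp only [dif_neg h]
    have hEd : ∀ (j : ℕ) (h : j ∈ S), E j ∈ w \ Set.range f := by
      intro j h; rw [hE1 j h]; exact h.choose.2
    have hEmem : ∀ j, E j ∈ w := by
      intro j
      by_cases h : j ∈ S
      · exact (hEd j h).1
      · rw [hE2 j h]; exact hsub ⟨_, rfl⟩
    have hEinj : Function.Injective E := by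
      intro j₁ j₂ hEq
      by_cases h₁ : j₁ ∈ S <;> by_cases h₂ : j₂ ∈ S
      · rw [hE1 j₁ h₁, hE1 j₂ h₂] at hEq
        have := Subtype.coe_injective hEq
        rw [← h₁.choose_spec, ← h₂.choose_spec, this]
      · exfalso
        exact (hEd j₁ h₁).2 (hEq ▸ (hE2 j₂ h₂ ▸ ⟨_, rfl⟩ : E j₂ ∈ Set.range f))
      · exfalso
        exact (hEd j₂ h₂).2 (hEq ▸ (hE2 j₁ h₁ ▸ ⟨_, rfl⟩ : E j₁ ∈ Set.range f))
      · rw [hE2 j₁ h₁, hE2 j₂ h₂] at hEq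
        have hcc := hfinj hEq
        have e₁ : Nat.nth p (Nat.count p j₁) = j₁ := Nat.nth_count (p := p) h₁
        have e₂ : Nat.nth p (Nat.count p j₂) = j₂ := Nat.nth_count (p := p) h₂
        rw [← e₁, ← e₂, hcc]
    have hrange : Set.range E = w := by
      apply Set.Subset.antisymm
      · rintro x ⟨j, rfl⟩; exact hEmem j
      · intro x hx
        by_cases hxf : x ∈ Set.range f
        · obtain ⟨k, rfl⟩ := hxf
          refine ⟨Nat.nth p k, ?_⟩
          have hnS : Nat.nth p k ∉ S := Nat.nth_mem_of_infinite hpi k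
          rw [hE2 _ hnS, Nat.count_nth_of_infinite hpi]
        · have hxd : x ∈ w \ Set.range f := ⟨hx, hxf⟩
          have hmem : (2 ^ (c ⟨x, hxd⟩ + 1)) ∈ S := ⟨⟨x, hxd⟩, rfl⟩
          refine ⟨2 ^ (c ⟨x, hxd⟩ + 1), ?_⟩
          rw [hE1 _ hmem]
          have hspec := hmem.choose_spec
          have hch : hmem.choose = ⟨x, hxd⟩ := by
            apply hc
            have := Nat.pow_right_injective (le_refl 2) hspec
            omega
          rw [hch]
    have honE : Orthonormal ℂ E := by
      have hEeq : E = ((↑) : w → H) ∘ (fun j => (⟨E j, hEmem j⟩ : w)) := rfl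
      rw [hEeq]
      exact honw.comp _ (fun a b hab => hEinj (congrArg Subtype.val hab))
    have hsp : ⊤ ≤ (Submodule.span ℂ (Set.range E)).topologicalClosure := by
      rw [hrange]
      rw [← Subtype.range_coe (s := w), ← hb]
      exact le_of_eq b.dense_span.symm
    refine ⟨HilbertBasis.mk honE hsp, ?_⟩
    have he' : ∀ j : ℕ, (HilbertBasis.mk honE hsp) j = E j :=
      fun j => congrFun (HilbertBasis.coe_mk honE hsp) j
    simp only [he']
    -- sums
    set A : ℕ → ℂ := fun m => ∑ k ∈ Finset.range m, ⟪f k, T (f k)⟫ with hAdef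
    set B : ℕ → ℂ := fun n =>
      ∑ j ∈ (Finset.range n).filter (· ∈ S), ⟪E j, T (E j)⟫ with hBdef
    set cnt : ℕ → ℕ := fun n => Nat.count p n with hcntdef
    have hsplit : ∀ n, ∑ j ∈ Finset.range n, ⟪E j, T (E j)⟫ = A (cnt n) + B n := by
      intro n
      rw [← Finset.sum_filter_add_sum_filter_not (Finset.range n) (· ∈ S)
        (fun j => ⟪E j, T (E j)⟫), add_comm]
      congr 1
      refine Finset.sum_nbij' (fun j => Nat.count p j) (fun k => Nat.nth p k) ?_ ?_ ?_ ?_ ?_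
      · intro j hj
        rw [Finset.mem_filter, Finset.mem_range] at hj
        rw [Finset.mem_range]
        exact Nat.count_strict_mono hj.2 hj.1
      · intro k hk
        rw [Finset.mem_range] at hk
        rw [Finset.mem_filter, Finset.mem_range]
        exact ⟨Nat.nth_lt_of_lt_count hk, Nat.nth_mem_of_infinite hpi k⟩
      · intro j hj
        rw [Finset.mem_filter] at hj
        exact Nat.nth_count hj.2
      · intro k _
        exact Nat.count_nth_of_infinite hpi k
      · intro j hj
        rw [Finset.mem_filter] at hj
        rw [hE2 _ hj.2]
    have hcard : ∀ n, ((Finset.range n).filter (· ∈ S)).card ≤ Nat.log 2 n := by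
      intro n
      have hle : ((Finset.range n).filter (· ∈ S)).card
          ≤ (Finset.Icc 1 (Nat.log 2 n)).card := by
        apply Finset.card_le_card_of_injOn (fun j => Nat.log 2 j)
        · intro j hj
          rw [Finset.mem_coe, Finset.mem_filter, Finset.mem_range] at hj
          obtain ⟨i, hi⟩ := hj.2
          have hi' : 2 ^ (c i + 1) = j := hi
          subst hi'
          rw [Finset.mem_coe, Finset.mem_Icc]
          beta_reduce
          rw [Nat.log_pow one_lt_two]
          exact ⟨by omega, by
            rw [← Nat.log_pow (b := 2) one_lt_two (c i + 1)]
            exact Nat.log_mono_right (le_of_lt hj.1)⟩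
        · intro j₁ h₁ j₂ h₂ hlog
          rw [Finset.mem_coe, Finset.mem_filter] at h₁ h₂
          obtain ⟨i₁, hi₁⟩ := h₁.2
          obtain ⟨i₂, hi₂⟩ := h₂.2
          have hi₁' : 2 ^ (c i₁ + 1) = j₁ := hi₁
          have hi₂' : 2 ^ (c i₂ + 1) = j₂ := hi₂
          subst hi₁'
          subst hi₂'
          simp only [Nat.log_pow one_lt_two] at hlog
          rw [hlog]
      simpa [Nat.card_Icc] using hle
    have hBnorm : ∀ n, ‖B n‖ ≤ (Nat.log 2 n : ℝ) * ‖T‖ := by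
      intro n
      calc ‖B n‖ ≤ ∑ j ∈ (Finset.range n).filter (· ∈ S), ‖⟪E j, T (E j)⟫‖ :=
            norm_sum_le _ _
        _ ≤ ∑ j ∈ (Finset.range n).filter (· ∈ S), ‖T‖ := by
            refine Finset.sum_le_sum fun j _ => ?_
            calc ‖⟪E j, T (E j)⟫‖ ≤ ‖E j‖ * ‖T (E j)‖ := norm_inner_le_norm _ _
              _ ≤ ‖E j‖ * (‖T‖ * ‖E j‖) := by
                  gcongr
                  exact T.le_opNorm _
              _ = ‖T‖ := by rw [honE.1 j]; ring
        _ = ((Finset.range n).filter (· ∈ S)).card * ‖T‖ := by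
            rw [Finset.sum_const, nsmul_eq_mul]
        _ ≤ (Nat.log 2 n : ℝ) * ‖T‖ := by
            gcongr
            exact_mod_cast hcard n
    have hcnt_add : ∀ n, cnt n + ((Finset.range n).filter (· ∈ S)).card = n := by
      intro n
      have h1 := Finset.card_filter_add_card_filter_not
        (s := Finset.range n) (p := (· ∈ S))
      rw [Finset.card_range] at h1
      have h2 : cnt n = ((Finset.range n).filter (fun j => ¬ j ∈ S)).card := by
        have h3 : cnt n = ((Finset.range n).filter p).card :=
          Nat.count_eq_card_filter_range p n
        rw [h3]
      omega
    have hcle : ∀ n, cnt n ≤ n := fun n => by have := hcnt_add n; omega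
    have hs_le : ∀ n, (n - cnt n : ℕ) ≤ Nat.log 2 n := fun n => by
      have := hcnt_add n; have := hcard n; omega
    have hcnt_top : Tendsto cnt atTop atTop := by
      refine tendsto_atTop_atTop_of_monotone (Nat.count_monotone p) (fun k => ?_)
      refine ⟨Nat.nth p k, ?_⟩
      show k ≤ Nat.count p (Nat.nth p k)
      rw [Nat.count_nth_of_infinite hpi]
    have hsn0 : Tendsto (fun n : ℕ => ((n - cnt n : ℕ) : ℝ) / n) atTop (𝓝 0) := by
      refine squeeze_zero (fun n => by positivity) (fun n => ?_) aux_log_div_tendsto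
      rcases Nat.eq_zero_or_pos n with rfl | hn
      · simp
      · have hn' : (0:ℝ) < n := by exact_mod_cast hn
        have hcast : ((n - cnt n : ℕ) : ℝ) ≤ (Nat.log 2 n : ℝ) := by
          exact_mod_cast hs_le n
        gcongr
    have L1 : Tendsto (fun n : ℕ => (cnt n : ℝ) / n) atTop (𝓝 1) := by
      have h1 : Tendsto (fun n : ℕ => 1 - ((n - cnt n : ℕ) : ℝ) / n) atTop (𝓝 1) := by
        simpa using tendsto_const_nhds.sub hsn0
      refine h1.congr' ?_
      filter_upwards [eventually_ge_atTop 1] with n hn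
      have hnn : (0:ℝ) < n := by exact_mod_cast hn
      have hcast : ((n - cnt n : ℕ) : ℝ) = (n : ℝ) - cnt n := by
        push_cast [hcle n]; ring
      rw [hcast]
      field_simp
      ring
    have L1C : Tendsto (fun n : ℕ => ((cnt n : ℂ)) / (n : ℂ)) atTop (𝓝 1) := by
      have h : Tendsto (fun n : ℕ => (((cnt n : ℝ) / n : ℝ) : ℂ)) atTop (𝓝 ((1:ℝ):ℂ)) :=
        (Complex.continuous_ofReal.tendsto 1).comp L1
      simp only [Complex.ofReal_one] at h
      refine h.congr fun n => ?_
      push_cast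
      ring
    have hA : Tendsto (fun n : ℕ => (cnt n : ℂ)⁻¹ • A (cnt n)) atTop (𝓝 μ) :=
      hlim.comp hcnt_top
    have main1 : Tendsto (fun n : ℕ => (n : ℂ)⁻¹ • A (cnt n)) atTop (𝓝 μ) := by
      have hmul : Tendsto (fun n : ℕ => ((cnt n : ℂ) / (n : ℂ)) • ((cnt n : ℂ)⁻¹ • A (cnt n)))
          atTop (𝓝 μ) := by
        simpa using L1C.smul hA
      refine hmul.congr' ?_
      filter_upwards [hcnt_top.eventually_ge_atTop 1, eventually_ge_atTop 1] with n h1 h2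
      have hc0 : (cnt n : ℂ) ≠ 0 := Nat.cast_ne_zero.2 (by omega)
      have hn0 : (n : ℂ) ≠ 0 := Nat.cast_ne_zero.2 (by omega)
      simp only [smul_eq_mul]
      field_simp
    have main2 : Tendsto (fun n : ℕ => (n : ℂ)⁻¹ • B n) atTop (𝓝 0) := by
      refine squeeze_zero_norm (fun n => ?_)
        (by simpa using aux_log_div_tendsto.mul_const ‖T‖)
      rw [norm_smul, norm_inv, Complex.norm_natCast]
      calc (n : ℝ)⁻¹ * ‖B n‖ ≤ (n : ℝ)⁻¹ * ((Nat.log 2 n : ℝ) * ‖T‖) :=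
            mul_le_mul_of_nonneg_left (hBnorm n) (by positivity)
        _ = (Nat.log 2 n : ℝ) / n * ‖T‖ := by ring
    have final := main1.add main2
    rw [add_zero] at final
    refine final.congr fun n => ?_
    rw [hsplit n, smul_add]
  · rintro ⟨e, h⟩
    exact ⟨⇑e, e.orthonormal, h⟩
end

section
/- Let (a_n), (b_n) be sequences of complex numbers with Σ|a_n| < ∞ and b_n → 0, and let (a'_n), (b'_n) be sequences obtained from (a_n), (b_n) by inserting or deleting zeros (i.e., for every α ≠ 0 the number of indices k with a_k = α equals the number with a'_k = α, and similarly for b, b'). Then the closures of the sets A = { Σ_n a_n b_{σ(n)} : σ permutation of ℕ } and A' = { Σ_n a'_n b'_{σ(n)} : σ permutation of ℕ } in ℂ coincide. -/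
open Filter Topology Set

private lemma fiber_equiv_exists {X Y : Type} (f : X → ℂ) (g : Y → ℂ)
    (h : ∀ z : ℂ, z ≠ 0 → Nonempty ({x // f x = z} ≃ {y // g y = z}))
    (hf : ∀ x, f x ≠ 0) (hg : ∀ y, g y ≠ 0) :
    ∃ e : X ≃ Y, ∀ x, g (e x) = f x := by
  have h' : ∀ z : ℂ, Nonempty ({x // f x = z} ≃ {y // g y = z}) := by
    intro z
    by_cases hz : z = 0
    · subst hz
      have : IsEmpty {x // f x = 0} := ⟨fun x => hf x.1 x.2⟩
      have : IsEmpty {y // g y = 0} := ⟨fun y => hg y.1 y.2⟩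
      exact ⟨Equiv.equivOfIsEmpty _ _⟩
    · exact h z hz
  refine ⟨(Equiv.sigmaFiberEquiv f).symm.trans
    ((Equiv.sigmaCongrRight fun z => (h' z).some).trans (Equiv.sigmaFiberEquiv g)), fun x => ?_⟩
  exact ((h' (f x)).some ⟨x, rfl⟩).2

private lemma exists_valueMatch (a a' : ℕ → ℂ)
    (h : ∀ α : ℂ, α ≠ 0 → Cardinal.mk {k : ℕ | a k = α} = Cardinal.mk {k : ℕ | a' k = α}) :
    ∃ e : {k : ℕ // a k ≠ 0} ≃ {k : ℕ // a' k ≠ 0}, ∀ x, a' (e x) = a (x : ℕ) := by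
  apply fiber_equiv_exists (f := fun x : {k : ℕ // a k ≠ 0} => a x)
    (g := fun y : {k : ℕ // a' k ≠ 0} => a' y)
  · intro z hz
    have e1 : {x : {k : ℕ // a k ≠ 0} // a x.1 = z} ≃ {k : ℕ // a k = z} :=
      ⟨fun x => ⟨x.1.1, x.2⟩, fun k => ⟨⟨k.1, fun h0 => hz (k.2.symm.trans h0)⟩, k.2⟩,
        fun _ => rfl, fun _ => rfl⟩
    have e2 : {y : {k : ℕ // a' k ≠ 0} // a' y.1 = z} ≃ {k : ℕ // a' k = z} :=
      ⟨fun x => ⟨x.1.1, x.2⟩, fun k => ⟨⟨k.1, fun h0 => hz (k.2.symm.trans h0)⟩, k.2⟩,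
        fun _ => rfl, fun _ => rfl⟩
    have := Cardinal.eq.mp (h z hz)
    exact ⟨e1.trans (this.some.trans e2.symm)⟩
  · exact fun x => x.2
  · exact fun y => y.2

private lemma summable_transfer (a a' : ℕ → ℂ) (ha : Summable fun n => ‖a n‖)
    (e : {k : ℕ // a k ≠ 0} ≃ {k : ℕ // a' k ≠ 0}) (he : ∀ x, a' (e x) = a (x : ℕ)) :
    Summable (fun n => ‖a' n‖) ∧ ∑' n, ‖a' n‖ = ∑' n, ‖a n‖ := by
  obtain ⟨t, hts⟩ := ha
  have hsup : Function.support (fun n => ‖a n‖) ⊆ {k : ℕ | a k ≠ 0} := by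
    intro n hn
    simpa [Function.mem_support, norm_ne_zero_iff] using hn
  have hsup' : Function.support (fun n => ‖a' n‖) ⊆ {k : ℕ | a' k ≠ 0} := by
    intro n hn
    simpa [Function.mem_support, norm_ne_zero_iff] using hn
  have h1 : HasSum ((fun n => ‖a n‖) ∘ (Subtype.val : {k : ℕ | a k ≠ 0} → ℕ)) t :=
    (hasSum_subtype_iff_of_support_subset hsup).2 hts
  have h2 : HasSum (((fun n => ‖a' n‖) ∘ (Subtype.val : {k : ℕ | a' k ≠ 0} → ℕ)) ∘ e) t := by
    have : (((fun n => ‖a' n‖) ∘ (Subtype.val : {k : ℕ | a' k ≠ 0} → ℕ)) ∘ e) =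
        ((fun n => ‖a n‖) ∘ (Subtype.val : {k : ℕ | a k ≠ 0} → ℕ)) := by
      funext x
      simp only [Function.comp_apply]
      rw [he x]
    rw [this]
    exact h1
  have h3 : HasSum (fun n => ‖a' n‖) t :=
    (hasSum_subtype_iff_of_support_subset hsup').1 (e.hasSum_iff.1 h2)
  exact ⟨h3.summable, h3.tsum_eq.trans hts.tsum_eq.symm⟩

private lemma tendsto_transfer (b b' : ℕ → ℂ) (hb : Tendsto b atTop (𝓝 0))
    (e : {k : ℕ // b k ≠ 0} ≃ {k : ℕ // b' k ≠ 0}) (he : ∀ x, b' (e x) = b (x : ℕ)) :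
    Tendsto b' atTop (𝓝 0) := by
  rw [NormedAddCommGroup.tendsto_nhds_zero] at hb ⊢
  intro ε hε
  have hb2 := hb ε hε
  rw [← Nat.cofinite_eq_atTop, eventually_cofinite] at hb2 ⊢
  have hmap : ∀ m : {n : ℕ | ¬ ‖b' n‖ < ε},
      ∃ k : {n : ℕ | ¬ ‖b n‖ < ε}, (e.symm ⟨m.1, fun h0 => m.2 (by simp [h0, hε])⟩ : ℕ) = k.1 := by
    intro m
    have hm0 : b' m.1 ≠ 0 := fun h0 => m.2 (by simp [h0, hε])
    refine ⟨⟨(e.symm ⟨m.1, hm0⟩ : ℕ), ?_⟩, rfl⟩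
    have := he (e.symm ⟨m.1, hm0⟩)
    rw [e.apply_symm_apply] at this
    intro hc
    exact m.2 (by rw [← this] at hc; exact hc)
  choose F hF using hmap
  have : Finite {n : ℕ | ¬ ‖b n‖ < ε} := hb2.to_subtype
  have hinj : Function.Injective F := by
    intro m₁ m₂ h12
    have h1 := hF m₁
    have h2 := hF m₂
    have key := h1.trans ((congrArg Subtype.val h12).trans h2.symm)
    have key2 := e.symm.injective (Subtype.ext key)
    have : (m₁ : ℕ) = (m₂ : ℕ) := by simpa using key2
    exact Subtype.ext this
  exact Set.finite_coe_iff.mp (Finite.of_injective F hinj)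

private lemma tail_bound (g c : ℕ → ℂ) (M : ℝ)
    (hc : Summable fun n => ‖c n‖)
    (hgc : ∀ n, ‖g n‖ ≤ M * ‖c n‖) (u : Finset ℕ) :
    ‖(∑' n, g n) - ∑ n ∈ u, g n‖ ≤ M * ∑' (n : ↑((↑u : Set ℕ)ᶜ)), ‖c n.1‖ := by
  have hg : Summable g := Summable.of_norm_bounded (hc.mul_left M) hgc
  have hrw : (∑' n, g n) - ∑ n ∈ u, g n = ∑' (n : ↑((↑u : Set ℕ)ᶜ)), g n.1 := by
    rw [← Summable.sum_add_tsum_compl (s := u) hg]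
    ring
  rw [hrw]
  have h1 : Summable (fun n : ↑((↑u : Set ℕ)ᶜ) => M * ‖c n.1‖) :=
    (hc.subtype _).mul_left M
  have hnorm : Summable (fun n : ↑((↑u : Set ℕ)ᶜ) => ‖g n.1‖) :=
    h1.of_nonneg_of_le (fun _ => norm_nonneg _) (fun n => hgc n.1)
  calc ‖∑' (n : ↑((↑u : Set ℕ)ᶜ)), g n.1‖ ≤ ∑' (n : ↑((↑u : Set ℕ)ᶜ)), ‖g n.1‖ :=
        norm_tsum_le_tsum_norm hnorm
    _ ≤ ∑' (n : ↑((↑u : Set ℕ)ᶜ)), M * ‖c n.1‖ := Summable.tsum_le_tsum (fun n => hgc n.1) hnorm h1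
    _ = M * ∑' (n : ↑((↑u : Set ℕ)ᶜ)), ‖c n.1‖ := tsum_mul_left

private lemma subset_closure_perm (a b a' b' : ℕ → ℂ)
    (ha : Summable fun n => ‖a n‖)
    (ha' : Summable fun n => ‖a' n‖)
    (htsum : ∑' n, ‖a' n‖ = ∑' n, ‖a n‖)
    (ea : {k : ℕ // a k ≠ 0} ≃ {k : ℕ // a' k ≠ 0}) (hea : ∀ x, a' (ea x) = a (x : ℕ))
    (eb : {k : ℕ // b k ≠ 0} ≃ {k : ℕ // b' k ≠ 0}) (heb : ∀ x, b' (eb x) = b (x : ℕ))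
    (M : ℝ) (hM1 : 1 ≤ M) (hMb : ∀ n, ‖b n‖ ≤ M) (hMb' : ∀ n, ‖b' n‖ ≤ M)
    (hb' : Tendsto b' atTop (𝓝 0)) :
    {z : ℂ | ∃ σ : Equiv.Perm ℕ, z = ∑' n, a n * b (σ n)} ⊆
      closure {z : ℂ | ∃ σ : Equiv.Perm ℕ, z = ∑' n, a' n * b' (σ n)} := by
  classical
  rintro z ⟨σ, rfl⟩
  rw [Metric.mem_closure_iff]
  intro ε hε
  set t := ∑' n, ‖a n‖ with ht
  have ht0 : 0 ≤ t := tsum_nonneg fun _ => norm_nonneg _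
  have hM0 : (0:ℝ) < M := lt_of_lt_of_le one_pos hM1
  set ε₁ := ε / (4 * M) with hε₁def
  have hε₁ : 0 < ε₁ := div_pos hε (by positivity)
  set δ := ε / (4 * (t + 1)) with hδdef
  have hδ : 0 < δ := div_pos hε (by positivity)
  -- choose the finite set s
  obtain ⟨s, hs⟩ :=
    ((tendsto_tsum_compl_atTop_zero (fun n => ‖a n‖)).eventually_lt_const hε₁).exists
  -- hs : ∑' (n : {x // x ∉ s}), ‖a n‖ < ε₁
  set T := s.filter (fun n => a n ≠ 0) with hT
  have hTne : ∀ n ∈ T, a n ≠ 0 := fun n hn => (Finset.mem_filter.mp hn).2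
  -- fA and gB
  set fA : ℕ → ℕ := fun n => if h : a n ≠ 0 then (ea ⟨n, h⟩ : ℕ) else 0 with hfA
  set gB : ℕ → ℕ := fun n => if h : b n ≠ 0 then (eb ⟨n, h⟩ : ℕ) else 0 with hgB
  have hfAval : ∀ n (h : a n ≠ 0), a' (fA n) = a n := by
    intro n h; simp only [hfA, dif_pos h]; exact hea ⟨n, h⟩
  have hgBval : ∀ n (h : b n ≠ 0), b' (gB n) = b n := by
    intro n h; simp only [hgB, dif_pos h]; exact heb ⟨n, h⟩
  have hfAinj : InjOn fA {n : ℕ | a n ≠ 0} := by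
    intro n hn m hm hnm
    simp only [Set.mem_setOf_eq] at hn hm
    simp only [hfA, dif_pos hn, dif_pos hm] at hnm
    have := ea.injective (Subtype.ext hnm)
    exact congrArg Subtype.val this
  have hgBinj : InjOn gB {n : ℕ | b n ≠ 0} := by
    intro n hn m hm hnm
    simp only [Set.mem_setOf_eq] at hn hm
    simp only [hgB, dif_pos hn, dif_pos hm] at hnm
    have := eb.injective (Subtype.ext hnm)
    exact congrArg Subtype.val this
  -- the small-b' fresh indices
  set V : Set ℕ := {m : ℕ | ‖b' m‖ < δ} with hV
  have hVc : Vᶜ.Finite := by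
    have := (NormedAddCommGroup.tendsto_nhds_zero.mp hb') δ hδ
    rw [← Nat.cofinite_eq_atTop, eventually_cofinite] at this
    exact this
  set Q₁ : Finset ℕ := (T.filter fun n => b (σ n) ≠ 0).image (fun n => gB (σ n)) with hQ₁
  set W : Set ℕ := V \ ↑Q₁ with hW
  have hWinf : W.Infinite := by
    have h1 := (hVc.union Q₁.finite_toSet).infinite_compl
    have h2 : (Vᶜ ∪ ↑Q₁)ᶜ = W := by
      rw [Set.compl_union, compl_compl, hW, Set.diff_eq]
    rwa [h2] at h1
  set ι : ℕ → ℕ := fun n => (Set.Infinite.natEmbedding W hWinf n : ℕ) with hι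
  have hιinj : Function.Injective ι :=
    fun n m h => (Set.Infinite.natEmbedding W hWinf).injective (Subtype.ext h)
  have hιW : ∀ n, ι n ∈ W := fun n => (Set.Infinite.natEmbedding W hWinf n).2
  -- the target map
  set tgt : ℕ → ℕ := fun n => if b (σ n) ≠ 0 then gB (σ n) else ι n with htgt
  have htgtval1 : ∀ n, b (σ n) ≠ 0 → b' (tgt n) = b (σ n) := by
    intro n h; simp only [htgt, if_pos h]; exact hgBval _ h
  have htgtval0 : ∀ n, b (σ n) = 0 → ‖b' (tgt n)‖ < δ := by
    intro n h
    have h' : tgt n = ι n := by simp [htgt, h]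
    rw [h']
    exact (hιW n).1
  have htgtinj : InjOn tgt ↑T := by
    intro n hn m hm hnm
    by_cases h1 : b (σ n) ≠ 0 <;> by_cases h2 : b (σ m) ≠ 0
    · simp only [htgt, if_pos h1, if_pos h2] at hnm
      exact σ.injective (hgBinj (show σ n ∈ {k : ℕ | b k ≠ 0} from h1)
        (show σ m ∈ {k : ℕ | b k ≠ 0} from h2) hnm)
    · simp only [htgt, if_pos h1, if_neg h2] at hnm
      exfalso
      have hQ : gB (σ n) ∈ Q₁ :=
        Finset.mem_image_of_mem _ (Finset.mem_filter.mpr ⟨Finset.mem_coe.mp hn, h1⟩)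
      exact (hιW m).2 (by rw [← hnm]; exact Finset.mem_coe.mpr hQ)
    · simp only [htgt, if_neg h1, if_pos h2] at hnm
      exfalso
      have hQ : gB (σ m) ∈ Q₁ :=
        Finset.mem_image_of_mem _ (Finset.mem_filter.mpr ⟨Finset.mem_coe.mp hm, h2⟩)
      exact (hιW n).2 (by rw [hnm]; exact Finset.mem_coe.mpr hQ)
    · simp only [htgt, if_neg h1, if_neg h2] at hnm
      exact hιinj hnm
  -- build the permutation σ'
  have hfAinjT : InjOn fA ↑T := fun n hn m hm h =>
    hfAinj (hTne n (Finset.mem_coe.mp hn)) (hTne m (Finset.mem_coe.mp hm)) h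
  set Pset : Set ℕ := fA '' ↑T with hPset
  set Qset : Set ℕ := tgt '' ↑T with hQset
  have hPfin : Pset.Finite := T.finite_toSet.image _
  have hQfin : Qset.Finite := T.finite_toSet.image _
  have hcard : Cardinal.mk ↥(Psetᶜ) = Cardinal.mk ↥(Qsetᶜ) := by
    have h1 : Cardinal.mk ↥(Psetᶜ) = Cardinal.aleph0 := by
      have := hPfin.infinite_compl.to_subtype
      exact le_antisymm Cardinal.mk_le_aleph0 (Cardinal.aleph0_le_mk _)
    have h2 : Cardinal.mk ↥(Qsetᶜ) = Cardinal.aleph0 := by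
      have := hQfin.infinite_compl.to_subtype
      exact le_antisymm Cardinal.mk_le_aleph0 (Cardinal.aleph0_le_mk _)
    rw [h1, h2]
  set c1 : ↥(↑T : Set ℕ) ≃ ↥Pset := Equiv.Set.imageOfInjOn fA ↑T hfAinjT with hc1
  set c2 : ↥(↑T : Set ℕ) ≃ ↥Qset := Equiv.Set.imageOfInjOn tgt ↑T htgtinj with hc2
  set eP : ↥Pset ≃ ↥Qset := c1.symm.trans c2 with heP
  set e' : ↥(Psetᶜ) ≃ ↥(Qsetᶜ) := (Cardinal.eq.mp hcard).some with he'
  set σ' : Equiv.Perm ℕ := (Equiv.Set.sumCompl Pset).symm.trans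
    ((eP.sumCongr e').trans (Equiv.Set.sumCompl Qset)) with hσ'
  have key : ∀ n ∈ T, σ' (fA n) = tgt n := by
    intro n hn
    have hnT : (n : ℕ) ∈ (↑T : Set ℕ) := Finset.mem_coe.mpr hn
    have hmem : fA n ∈ Pset := Set.mem_image_of_mem fA hnT
    have he1 : eP ⟨fA n, hmem⟩ = ⟨tgt n, Set.mem_image_of_mem tgt hnT⟩ := by
      have hc1n : c1 ⟨n, hnT⟩ = ⟨fA n, hmem⟩ := rfl
      have : c1.symm ⟨fA n, hmem⟩ = ⟨n, hnT⟩ := by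
        rw [Equiv.symm_apply_eq, hc1n]
      simp only [heP, Equiv.trans_apply, this]
      rfl
    simp only [hσ', Equiv.trans_apply]
    rw [Equiv.Set.sumCompl_symm_apply_of_mem hmem]
    simp [he1]
  -- the finset P
  set P : Finset ℕ := T.image fA with hP
  have hPcoe : (↑P : Set ℕ) = Pset := by rw [hP, Finset.coe_image]
  -- tail estimates
  have hza : ∀ n, ‖a n * b (σ n)‖ ≤ M * ‖a n‖ := by
    intro n
    rw [norm_mul, mul_comm (M : ℝ)]
    exact mul_le_mul_of_nonneg_left (hMb _) (norm_nonneg _)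
  have hza' : ∀ m, ‖a' m * b' (σ' m)‖ ≤ M * ‖a' m‖ := by
    intro m
    rw [norm_mul, mul_comm (M : ℝ)]
    exact mul_le_mul_of_nonneg_left (hMb' _) (norm_nonneg _)
  have htail1 := tail_bound (fun n => a n * b (σ n)) a M ha hza s
  have htail2 := tail_bound (fun m => a' m * b' (σ' m)) a' M ha' hza' P
  have hsc : ∑' (n : ↑((↑s : Set ℕ)ᶜ)), ‖a n.1‖ < ε₁ := hs
  -- the complement sum over P is also small
  have hsum_a' : (∑ m ∈ P, ‖a' m‖) + ∑' (m : ↑((↑P : Set ℕ)ᶜ)), ‖a' m.1‖ = t := by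
    rw [Summable.sum_add_tsum_compl ha', htsum]
  have hsum_a : (∑ n ∈ s, ‖a n‖) + ∑' (n : ↑((↑s : Set ℕ)ᶜ)), ‖a n.1‖ = t :=
    Summable.sum_add_tsum_compl ha
  have hPsum : ∑ m ∈ P, ‖a' m‖ = ∑ n ∈ s, ‖a n‖ := by
    rw [hP, Finset.sum_image (fun x hx y hy h => hfAinjT (Finset.mem_coe.mpr hx)
      (Finset.mem_coe.mpr hy) h)]
    rw [Finset.sum_congr rfl (fun n hn => by rw [hfAval n (hTne n hn)])]
    exact Finset.sum_filter_of_ne (fun x _ hne => by simpa using hne)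
  have hPc_small : ∑' (m : ↑((↑P : Set ℕ)ᶜ)), ‖a' m.1‖ < ε₁ := by
    have : ∑' (m : ↑((↑P : Set ℕ)ᶜ)), ‖a' m.1‖ = ∑' (n : ↑((↑s : Set ℕ)ᶜ)), ‖a n.1‖ := by
      linarith [hsum_a', hsum_a, hPsum]
    rw [this]; exact hsc
  -- middle estimate
  have hsP : ∑ m ∈ P, (a' m * b' (σ' m)) = ∑ n ∈ T, a n * b' (tgt n) := by
    rw [hP, Finset.sum_image (fun x hx y hy h => hfAinjT (Finset.mem_coe.mpr hx)
      (Finset.mem_coe.mpr hy) h)]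
    apply Finset.sum_congr rfl
    intro n hn
    rw [key n hn, hfAval n (hTne n hn)]
  have hss : ∑ n ∈ s, a n * b (σ n) = ∑ n ∈ T, a n * b (σ n) :=
    (Finset.sum_filter_of_ne (fun x _ hne => by
      intro h0; exact hne (by rw [h0, zero_mul]))).symm
  have hTt : ∑ n ∈ T, ‖a n‖ ≤ t := Summable.sum_le_tsum T (fun n _ => norm_nonneg _) ha
  have hmid : ‖(∑ m ∈ P, (a' m * b' (σ' m))) - ∑ n ∈ s, a n * b (σ n)‖ ≤ δ * t := by
    rw [hsP, hss, ← Finset.sum_sub_distrib]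
    have hterm : ∀ n ∈ T, ‖a n * b' (tgt n) - a n * b (σ n)‖ ≤ ‖a n‖ * δ := by
      intro n hn
      rw [← mul_sub, norm_mul]
      by_cases hbn : b (σ n) ≠ 0
      · rw [htgtval1 n hbn, sub_self, norm_zero, mul_zero]
        positivity
      · push_neg at hbn
        rw [hbn, sub_zero]
        exact mul_le_mul_of_nonneg_left (htgtval0 n hbn).le (norm_nonneg _)
    calc ‖∑ n ∈ T, (a n * b' (tgt n) - a n * b (σ n))‖
        ≤ ∑ n ∈ T, ‖a n * b' (tgt n) - a n * b (σ n)‖ := norm_sum_le _ _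
      _ ≤ ∑ n ∈ T, ‖a n‖ * δ := Finset.sum_le_sum hterm
      _ = δ * ∑ n ∈ T, ‖a n‖ := by rw [← Finset.sum_mul, mul_comm]
      _ ≤ δ * t := mul_le_mul_of_nonneg_left hTt hδ.le
  -- put everything together
  refine ⟨∑' m, a' m * b' (σ' m), ⟨σ', rfl⟩, ?_⟩
  rw [dist_eq_norm]
  have hdecomp : (∑' n, a n * b (σ n)) - (∑' m, a' m * b' (σ' m)) =
      ((∑' n, a n * b (σ n)) - ∑ n ∈ s, a n * b (σ n))
      - ((∑' m, a' m * b' (σ' m)) - ∑ m ∈ P, (a' m * b' (σ' m)))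
      - ((∑ m ∈ P, (a' m * b' (σ' m))) - ∑ n ∈ s, a n * b (σ n)) := by ring
  have hbound1 : M * ∑' (n : ↑((↑s : Set ℕ)ᶜ)), ‖a n.1‖ ≤ ε / 4 := by
    have h := mul_le_mul_of_nonneg_left hsc.le hM0.le
    have : M * ε₁ = ε / 4 := by
      rw [hε₁def]; field_simp
    linarith
  have hbound2 : M * ∑' (m : ↑((↑P : Set ℕ)ᶜ)), ‖a' m.1‖ ≤ ε / 4 := by
    have h := mul_le_mul_of_nonneg_left hPc_small.le hM0.le
    have : M * ε₁ = ε / 4 := by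
      rw [hε₁def]; field_simp
    linarith
  have hbound3 : δ * t ≤ ε / 4 := by
    rw [hδdef, div_mul_eq_mul_div, div_le_div_iff₀ (by positivity) (by norm_num)]
    nlinarith
  calc ‖(∑' n, a n * b (σ n)) - (∑' m, a' m * b' (σ' m))‖
      ≤ ‖(∑' n, a n * b (σ n)) - ∑ n ∈ s, a n * b (σ n)‖
        + ‖(∑' m, a' m * b' (σ' m)) - ∑ m ∈ P, (a' m * b' (σ' m))‖
        + ‖(∑ m ∈ P, (a' m * b' (σ' m))) - ∑ n ∈ s, a n * b (σ n)‖ := by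
        rw [hdecomp]
        exact (norm_sub_le _ _).trans (by gcongr; exact norm_sub_le _ _)
    _ ≤ ε / 4 + ε / 4 + ε / 4 := by
        gcongr <;> [exact htail1.trans hbound1; exact htail2.trans hbound2;
          exact hmid.trans hbound3]
    _ < ε := by linarith

theorem closure_perm_sum_set_eq_of_eq_up_to_zeros
    (a b a' b' : ℕ → ℂ)
    (ha : Summable fun n => ‖a n‖)
    (hb : Tendsto b atTop (𝓝 0))
    (haa' : ∀ α : ℂ, α ≠ 0 →
      Cardinal.mk {k : ℕ | a k = α} = Cardinal.mk {k : ℕ | a' k = α})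
    (hbb' : ∀ α : ℂ, α ≠ 0 →
      Cardinal.mk {k : ℕ | b k = α} = Cardinal.mk {k : ℕ | b' k = α}) :
    closure {z : ℂ | ∃ σ : Equiv.Perm ℕ, z = ∑' n, a n * b (σ n)} =
      closure {z : ℂ | ∃ σ : Equiv.Perm ℕ, z = ∑' n, a' n * b' (σ n)} := by
  obtain ⟨ea, hea⟩ := exists_valueMatch a a' haa'
  obtain ⟨eb, heb⟩ := exists_valueMatch b b' hbb'
  obtain ⟨ha', htsum⟩ := summable_transfer a a' ha ea hea
  have hb' : Tendsto b' atTop (𝓝 0) := tendsto_transfer b b' hb eb heb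
  obtain ⟨C, hC⟩ := hb.norm.bddAbove_range
  set M := max C 1 with hM
  have hM1 : (1:ℝ) ≤ M := le_max_right C 1
  have hMb : ∀ n, ‖b n‖ ≤ M := fun n =>
    le_trans (hC ⟨n, rfl⟩) (le_max_left C 1)
  have hMb' : ∀ n, ‖b' n‖ ≤ M := by
    intro n
    by_cases h : b' n = 0
    · rw [h, norm_zero]; linarith
    · have hx := heb (eb.symm ⟨n, h⟩)
      rw [Equiv.apply_symm_apply] at hx
      calc ‖b' n‖ = ‖b (eb.symm ⟨n, h⟩ : ℕ)‖ := by rw [← hx]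
        _ ≤ M := hMb _
  have hea' : ∀ x : {k : ℕ // a' k ≠ 0}, a (ea.symm x) = a' (x : ℕ) := by
    intro x
    have := hea (ea.symm x)
    rw [Equiv.apply_symm_apply] at this
    exact this.symm
  have heb' : ∀ x : {k : ℕ // b' k ≠ 0}, b (eb.symm x) = b' (x : ℕ) := by
    intro x
    have := heb (eb.symm x)
    rw [Equiv.apply_symm_apply] at this
    exact this.symm
  refine subset_antisymm (closure_minimal ?_ isClosed_closure)
    (closure_minimal ?_ isClosed_closure)
  · exact subset_closure_perm a b a' b' ha ha' htsum ea hea eb heb M hM1 hMb hMb' hb'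
  · exact subset_closure_perm a' b' a b ha' ha htsum.symm ea.symm hea' eb.symm heb'
      M hM1 hMb' hMb hb
end

section
/- Let H be a separable Hilbert space with orthonormal basis (e_n), let C = ⟨e_1,·⟩e_1 and T = id_H. Then the C-numerical range W_C(T) = { tr(C U† T U) : U unitary } equals {1}, while for the block truncations C_n = Π_n C Π_n = C and T_n = Π_n (where Π_n is the orthogonal projection onto span{e_1,…,e_n}) one has W_{C_n}(T_n) = [0,1] for every n. In particular, the closure of W_C(T) is a proper subset of the limit of the truncated numerical ranges. -/
local notation "⟪" x ", " y "⟫" => @inner ℂ _ _ x y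

section Aux

variable {H : Type*} [NormedAddCommGroup H] [InnerProductSpace ℂ H] [CompleteSpace H]

omit [CompleteSpace H] in
lemma aux_reflection {v w : H} (h : ⟪w - v, v + w⟫ = 0) :
    ∃ f : H ≃ₗᵢ[ℂ] H, f v = w := by
  set K : Submodule ℂ H := (ℂ ∙ (w - v))ᗮ
  refine ⟨Submodule.reflection K, ?_⟩
  have hm : ((2:ℂ)⁻¹ • (v + w)) ∈ K := by
    rw [Submodule.mem_orthogonal_singleton_iff_inner_right, inner_smul_right, h, mul_zero]
  have hproj : K.starProjection v = (2:ℂ)⁻¹ • (v + w) := by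
    refine Submodule.eq_starProjection_of_mem_orthogonal hm ?_
    have : v - (2:ℂ)⁻¹ • (v + w) = (-(2:ℂ)⁻¹) • (w - v) := by module
    rw [this]
    exact Submodule.le_orthogonal_orthogonal _
      (Submodule.smul_mem _ _ (Submodule.mem_span_singleton_self _))
  rw [Submodule.reflection_apply, hproj, two_smul]
  module

omit [CompleteSpace H] in
lemma aux_tsum (e : HilbertBasis ℕ ℂ H) (S : H →L[ℂ] H) :
    ∑' n, ⟪e n, (((innerSL ℂ (e 0)).smulRight (e 0)).comp S) (e n)⟫ = ⟪e 0, S (e 0)⟫ := by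
  have horth := orthonormal_iff_ite.mp e.orthonormal
  rw [tsum_eq_single 0]
  · simp [inner_smul_right, horth 0 0, -inner_self_eq_norm_sq_to_K]
  · intro n hn
    simp [inner_smul_right, horth n 0, hn]

lemma aux_unitary_val (e : HilbertBasis ℕ ℂ H) (T U : H →L[ℂ] H) :
    ∑' n, ⟪e n, (((innerSL ℂ (e 0)).smulRight (e 0)).comp
        ((star U).comp (T.comp U))) (e n)⟫ = ⟪U (e 0), T (U (e 0))⟫ := by
  rw [aux_tsum]
  simp [ContinuousLinearMap.star_eq_adjoint, ContinuousLinearMap.adjoint_inner_right]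

end Aux

/-- The `C`-numerical range of `T`, with the trace computed along the Hilbert
basis `e`: `W_C(T) = { tr(C U† T U) | U unitary }`. -/
noncomputable def CNumRange {H : Type*} [NormedAddCommGroup H] [InnerProductSpace ℂ H]
    [CompleteSpace H] (e : HilbertBasis ℕ ℂ H) (C T : H →L[ℂ] H) : Set ℂ :=
  {z : ℂ | ∃ U ∈ unitary (H →L[ℂ] H),
    z = ∑' n, ⟪e n, (C.comp ((star U).comp (T.comp U))) (e n)⟫}

theorem CNumRange_rank_one_id_counterexample
    {H : Type*} [NormedAddCommGroup H] [InnerProductSpace ℂ H] [CompleteSpace H]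
    (e : HilbertBasis ℕ ℂ H) :
    CNumRange e ((innerSL ℂ (e 0)).smulRight (e 0)) 1 = {1} ∧
    (∀ n : ℕ, 0 < n →
      CNumRange e ((innerSL ℂ (e 0)).smulRight (e 0))
          (∑ j ∈ Finset.range n, (innerSL ℂ (e j)).smulRight (e j)) =
        Complex.ofReal '' Set.Icc (0:ℝ) 1) ∧
    closure (CNumRange e ((innerSL ℂ (e 0)).smulRight (e 0)) 1) ⊂
      Complex.ofReal '' Set.Icc (0:ℝ) 1 := by
  have horth := orthonormal_iff_ite.mp e.orthonormal
  have h00 : ⟪e 0, e 0⟫ = 1 := by simpa using horth 0 0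
  have hpart1 : CNumRange e ((innerSL ℂ (e 0)).smulRight (e 0)) 1 = {1} := by
    ext z
    simp only [CNumRange, Set.mem_setOf_eq, Set.mem_singleton_iff]
    constructor
    · rintro ⟨U, hU, rfl⟩
      rw [aux_unitary_val]
      simpa [h00, -inner_self_eq_norm_sq_to_K] using ContinuousLinearMap.inner_map_map_of_mem_unitary hU (e 0) (e 0)
    · rintro rfl
      exact ⟨1, one_mem _, by rw [aux_unitary_val]; simp [h00, -inner_self_eq_norm_sq_to_K]⟩
  refine ⟨hpart1, ?_, ?_⟩
  · intro n hn
    ext z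
    simp only [CNumRange, Set.mem_setOf_eq]
    constructor
    · rintro ⟨U, hU, rfl⟩
      rw [aux_unitary_val]
      obtain ⟨x, hx⟩ : ∃ x : H, x = U (e 0) := ⟨_, rfl⟩
      rw [← hx]
      have hxn : ⟪x, x⟫ = 1 := by
        rw [hx]
        simpa [h00, -inner_self_eq_norm_sq_to_K] using ContinuousLinearMap.inner_map_map_of_mem_unitary hU (e 0) (e 0)
      have hval : ⟪x, (∑ j ∈ Finset.range n, (innerSL ℂ (e j)).smulRight (e j)) x⟫
          = ((∑ j ∈ Finset.range n, Complex.normSq ⟪e j, x⟫ : ℝ) : ℂ) := by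
        rw [ContinuousLinearMap.sum_apply, inner_sum, Complex.ofReal_sum]
        refine Finset.sum_congr rfl fun j _ => ?_
        simp only [ContinuousLinearMap.smulRight_apply, innerSL_apply_apply, inner_smul_right]
        rw [← inner_conj_symm x (e j), Complex.mul_conj]
      rw [hval]
      refine ⟨_, ⟨?_, ?_⟩, rfl⟩
      · exact Finset.sum_nonneg fun j _ => Complex.normSq_nonneg _
      · have hsum : Summable fun i => Complex.normSq ⟪e i, x⟫ := by
          rw [← Complex.summable_ofReal]
          refine (e.summable_inner_mul_inner x x).congr fun i => ?_
          rw [← inner_conj_symm x (e i), ← Complex.normSq_eq_conj_mul_self]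
        have hts : ∑' i, ((Complex.normSq ⟪e i, x⟫ : ℝ) : ℂ) = ⟪x, x⟫ := by
          rw [← e.tsum_inner_mul_inner x x]
          refine tsum_congr fun i => ?_
          rw [← inner_conj_symm x (e i), ← Complex.normSq_eq_conj_mul_self]
        have htsum : ∑' i, Complex.normSq ⟪e i, x⟫ = 1 := by
          have h2 := hts.trans hxn
          rw [← Complex.ofReal_tsum] at h2
          exact_mod_cast h2
        calc ∑ j ∈ Finset.range n, Complex.normSq ⟪e j, x⟫
            ≤ ∑' i, Complex.normSq ⟪e i, x⟫ :=
              Summable.sum_le_tsum _ (fun i _ => Complex.normSq_nonneg _) hsum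
          _ = 1 := htsum
    · rintro ⟨r, ⟨hr0, hr1⟩, rfl⟩
      obtain ⟨a, ha⟩ : ∃ a : ℂ, a = (Real.sqrt r : ℂ) := ⟨_, rfl⟩
      obtain ⟨b, hb⟩ : ∃ b : ℂ, b = (Real.sqrt (1 - r) : ℂ) := ⟨_, rfl⟩
      obtain ⟨x, hxdef⟩ : ∃ x : H, x = a • e 0 + b • e n := ⟨_, rfl⟩
      have ha2 : a * a = (r : ℂ) := by
        rw [ha, ← Complex.ofReal_mul, Real.mul_self_sqrt hr0]
      have hb2 : b * b = ((1 - r : ℝ) : ℂ) := by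
        rw [hb, ← Complex.ofReal_mul, Real.mul_self_sqrt (by linarith)]
      have hane : (starRingEnd ℂ) a = a := by rw [ha]; exact Complex.conj_ofReal _
      have hbne : (starRingEnd ℂ) b = b := by rw [hb]; exact Complex.conj_ofReal _
      have hn0 : (0 : ℕ) ≠ n := by omega
      have hinner0x : ⟪e 0, x⟫ = a := by
        simp [hxdef, inner_add_right, inner_smul_right, horth 0 0, horth 0 n, hn0,
          -inner_self_eq_norm_sq_to_K]
      have hinnerx0 : ⟪x, e 0⟫ = a := by
        rw [← inner_conj_symm x (e 0), hinner0x, hane]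
      have hxx : ⟪x, x⟫ = 1 := by
        have expand : ⟪x, x⟫ = (starRingEnd ℂ) a * a + (starRingEnd ℂ) b * b := by
          rw [hxdef]
          simp [inner_add_left, inner_add_right, inner_smul_left, inner_smul_right,
            horth 0 0, horth 0 n, horth n 0, horth n n, hn0, hn0.symm,
            -inner_self_eq_norm_sq_to_K]
          ring
        rw [expand, hane, hbne, ha2, hb2]
        push_cast
        ring
      obtain ⟨f, hf⟩ := aux_reflection (v := e 0) (w := x)
        (by rw [inner_sub_left, inner_add_right, inner_add_right, hxx, hinnerx0,
              hinner0x, h00]; ring)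
      refine ⟨(f : H →L[ℂ] H), (Unitary.linearIsometryEquiv.symm f).property, ?_⟩
      rw [aux_unitary_val]
      have hfe : (f : H →L[ℂ] H) (e 0) = x := hf
      rw [hfe, ContinuousLinearMap.sum_apply, inner_sum, Finset.sum_eq_single 0]
      · simp only [ContinuousLinearMap.smulRight_apply, innerSL_apply_apply, inner_smul_right,
          hinner0x, hinnerx0]
        rw [ha2]
      · intro j hj hj0
        have hjn : j ≠ n := Nat.ne_of_lt (Finset.mem_range.mp hj)
        simp [hxdef, inner_add_right, inner_smul_right, horth j 0, horth j n, hj0, hjn]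
      · intro h0
        exact absurd (Finset.mem_range.mpr hn) h0
  · rw [hpart1, closure_singleton]
    constructor
    · rintro z rfl
      exact ⟨1, ⟨zero_le_one, le_refl 1⟩, Complex.ofReal_one⟩
    · intro hsub
      have h0 : (0 : ℂ) ∈ Complex.ofReal '' Set.Icc (0:ℝ) 1 :=
        ⟨0, ⟨le_refl 0, zero_le_one⟩, Complex.ofReal_zero⟩
      have := hsub h0
      simp at this
end

section
/- Let (a_n) = (a'_n) = (1/2, 1/4, 1/8, …), (b_n) = (1,1,1,…) and (b'_n) = (0,1,1,1,…). Then A := { Σ_n a_n b_{σ(n)} : σ permutation of ℕ } = {1} while A' := { Σ_n a'_n b'_{σ(n)} : σ permutation of ℕ } = { 1 − 1/2^n : n ∈ ℕ }; in particular the closure of A is a proper subset of the closure of A', showing that the assumption b_n → 0 in the rearrangement lemma cannot be dropped. -/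
lemma geo_half_summable : Summable (fun n : ℕ => (1:ℂ) / 2 ^ (n + 1)) := by
  have h : Summable (fun n : ℕ => ((1:ℂ)/2) ^ n) :=
    summable_geometric_of_norm_lt_one (by norm_num)
  have := (h.mul_right ((1:ℂ)/2))
  refine this.congr fun n => ?_
  simp [pow_succ, div_pow, mul_comm]

lemma geo_half_tsum : ∑' n : ℕ, (1:ℂ) / 2 ^ (n + 1) = 1 := by
  have h : ‖(1:ℂ)/2‖ < 1 := by norm_num
  have hg : ∑' n : ℕ, ((1:ℂ)/2) ^ n = (1 - 1/2)⁻¹ :=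
    tsum_geometric_of_norm_lt_one h
  have : ∑' n : ℕ, (1:ℂ)/2^(n+1) = ∑' n : ℕ, ((1:ℂ)/2)^n * (1/2) := by
    refine tsum_congr fun n => ?_
    simp [pow_succ, div_pow, mul_comm]
  rw [this, tsum_mul_right, hg]
  norm_num

/-- With `a n = aₙ' = 1/2^(n+1)` (i.e. `(1/2, 1/4, 1/8, …)`), `b = (1,1,1,…)` and
`b' = (0,1,1,1,…)`, the rearrangement sets are `A = {1}` and
`A' = {1 - 1/2ⁿ : n ≥ 1}`, and `closure A ⊊ closure A'`. -/
theorem rearrangement_counterexample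
    (a a' b b' : ℕ → ℂ)
    (ha : ∀ n, a n = 1 / 2 ^ (n + 1)) (ha' : ∀ n, a' n = 1 / 2 ^ (n + 1))
    (hb : ∀ n, b n = 1)
    (hb'0 : b' 0 = 0) (hb' : ∀ n, b' (n + 1) = 1) :
    {z : ℂ | ∃ σ : Equiv.Perm ℕ, z = ∑' n, a n * b (σ n)} = {1} ∧
    {z : ℂ | ∃ σ : Equiv.Perm ℕ, z = ∑' n, a' n * b' (σ n)} =
      {z : ℂ | ∃ n : ℕ, z = 1 - 1 / 2 ^ (n + 1)} ∧
    closure {z : ℂ | ∃ σ : Equiv.Perm ℕ, z = ∑' n, a n * b (σ n)} ⊂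
      closure {z : ℂ | ∃ σ : Equiv.Perm ℕ, z = ∑' n, a' n * b' (σ n)} := by
  have hA : Summable a' := geo_half_summable.congr fun n => (ha' n).symm
  have hA1 : ∑' n, a' n = 1 := by
    rw [tsum_congr ha']; exact geo_half_tsum
  -- part 1 helper
  have h1sum : ∀ σ : Equiv.Perm ℕ, ∑' n, a n * b (σ n) = 1 := by
    intro σ
    have : ∀ n, a n * b (σ n) = (1:ℂ)/2^(n+1) := by
      intro n; rw [ha, hb, mul_one]
    rw [tsum_congr this, geo_half_tsum]
  -- part 2 helper
  have key : ∀ σ : Equiv.Perm ℕ,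
      ∑' n, a' n * b' (σ n) = 1 - 1/2^((σ.symm 0 : ℕ) + 1) := by
    intro σ
    set k := σ.symm 0 with hk
    have hσk : σ k = 0 := σ.apply_symm_apply 0
    have hfun : ∀ n, a' n * b' (σ n) = a' n - (if n = k then a' k else 0) := by
      intro n
      by_cases h : n = k
      · subst h; simp [hσk, hb'0]
      · have hne : σ n ≠ 0 := by
          intro hc
          exact h (by rw [hk, ← hc, Equiv.symm_apply_apply])
        obtain ⟨m, hm⟩ := Nat.exists_eq_succ_of_ne_zero hne
        rw [hm, hb', if_neg h, mul_one, sub_zero]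
    have hIte : Summable (fun n => if n = k then a' k else 0) := by
      apply summable_of_ne_finset_zero (s := {k})
      intro n hn
      simp only [Finset.mem_singleton] at hn
      simp [hn]
    calc ∑' n, a' n * b' (σ n)
        = ∑' n, (a' n - (if n = k then a' k else 0)) := tsum_congr hfun
      _ = (∑' n, a' n) - ∑' n, (if n = k then a' k else 0) := Summable.tsum_sub hA hIte
      _ = 1 - a' k := by rw [hA1, tsum_ite_eq]
      _ = 1 - 1/2^(k+1) := by rw [ha']
  have hset1 : {z : ℂ | ∃ σ : Equiv.Perm ℕ, z = ∑' n, a n * b (σ n)} = {1} := by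
    ext z
    simp only [Set.mem_setOf_eq, Set.mem_singleton_iff]
    constructor
    · rintro ⟨σ, rfl⟩; exact h1sum σ
    · rintro rfl; exact ⟨1, (h1sum 1).symm⟩
  have hset2 : {z : ℂ | ∃ σ : Equiv.Perm ℕ, z = ∑' n, a' n * b' (σ n)} =
      {z : ℂ | ∃ n : ℕ, z = 1 - 1 / 2 ^ (n + 1)} := by
    ext z
    simp only [Set.mem_setOf_eq]
    constructor
    · rintro ⟨σ, rfl⟩; exact ⟨σ.symm 0, key σ⟩
    · rintro ⟨n, rfl⟩
      refine ⟨Equiv.swap n 0, ?_⟩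
      have hs : (Equiv.swap n 0).symm 0 = n := by
        rw [Equiv.symm_swap, Equiv.swap_apply_right]
      rw [key, hs]
  refine ⟨hset1, hset2, ?_⟩
  rw [hset1, hset2]
  have hcl : closure ({1} : Set ℂ) = {1} := isClosed_singleton.closure_eq
  rw [hcl]
  constructor
  · -- {1} ⊆ closure A'
    intro z hz
    rw [Set.mem_singleton_iff] at hz
    subst hz
    have htend : Filter.Tendsto (fun n : ℕ => (1:ℂ) - 1/2^(n+1)) Filter.atTop (nhds 1) := by
      have h0 : Filter.Tendsto (fun n : ℕ => ((1:ℂ)/2)^n) Filter.atTop (nhds 0) :=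
        tendsto_pow_atTop_nhds_zero_of_norm_lt_one (by norm_num)
      have h1 : Filter.Tendsto (fun n : ℕ => (1:ℂ)/2^(n+1)) Filter.atTop (nhds 0) := by
        have := h0.comp (Filter.tendsto_add_atTop_nat 1)
        refine this.congr fun n => ?_
        simp [div_pow]
      have := h1.const_sub (1:ℂ)
      simpa using this
    exact mem_closure_of_tendsto htend (Filter.Eventually.of_forall fun n => ⟨n, rfl⟩)
  · -- proper
    intro hsub
    have h12 : (1:ℂ)/2 ∈ closure {z : ℂ | ∃ n : ℕ, z = 1 - 1 / 2 ^ (n + 1)} := by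
      apply subset_closure
      exact ⟨0, by norm_num⟩
    have := hsub h12
    rw [Set.mem_singleton_iff] at this
    norm_num at this
end
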